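/- Fix t ∈ [0,1) and let d ∈ (t,1) be the unique solution of ξ_d(t) = ξ_d(1). For s ∈ (t,d), let f(s) = ξ_{s,↑}^{-1}(ξ_s(t)), where ξ_{s,↑} denotes the restriction of ξ_s to [s,1] (which is strictly increasing hence invertible). Then f is strictly increasing on (t,d). -/

import Mathlib

noncomputable def zeta (t s : ℝ) : ℝ := s + (1 - t) * Real.log (1 - s)
noncomputable def xi (s t : ℝ) : ℝ := zeta t t - zeta t s

/-!
For `t < u` the gap `ξ_s(u) - ξ_s(t) = ζ_u(u) - ζ_t(t) + (u - t) ln (1 - s)` is strictly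
decreasing in `s < 1`. Take `t < s₁ < s₂ < d`. If `f s₁ < s₂` we are done since `s₂ ≤ f s₂`.
Otherwise `f s₁ ∈ [s₂, 1]`, and `ξ_{s₂}(f s₁) - ξ_{s₂}(t) < ξ_{s₁}(f s₁) - ξ_{s₁}(t) = 0`, i.e.
`ξ_{s₂}(f s₁) < ξ_{s₂}(t) = ξ_{s₂}(f s₂)`; as `ξ_{s₂}` is increasing on `[s₂, 1]`, `f s₁ < f s₂`.
-/

open Real Set

lemma hasDerivAt_xi (s : ℝ) {u : ℝ} (hu : u ≠ 1) :
    HasDerivAt (xi s) (log (1 - s) - log (1 - u)) u := by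
  have hu' : 1 - u ≠ 0 := sub_ne_zero.mpr hu.symm
  have hsub : HasDerivAt (fun u : ℝ => 1 - u) (-1) u := (hasDerivAt_id u).const_sub 1
  have hlog : HasDerivAt (fun u : ℝ => log (1 - u)) ((1 - u)⁻¹ * (-1)) u :=
    (hasDerivAt_log hu').comp u hsub
  have h := ((hasDerivAt_id' u).add (hsub.mul hlog)).sub
    ((hasDerivAt_const u s).add (hsub.mul_const (log (1 - s))))
  refine h.congr_deriv ?_
  field_simp
  ring

lemma continuous_xi (s : ℝ) : Continuous (xi s) := by
  have h : Continuous fun u : ℝ => (1 - u) * log (1 - u) :=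
    continuous_mul_log.comp (continuous_const.sub continuous_id)
  unfold xi zeta
  fun_prop

lemma xi_strictMonoOn (s : ℝ) : StrictMonoOn (xi s) (Icc s 1) := by
  refine strictMonoOn_of_deriv_pos (convex_Icc s 1) (continuous_xi s).continuousOn ?_
  rw [interior_Icc]
  intro u ⟨hsu, hu1⟩
  rw [(hasDerivAt_xi s hu1.ne).deriv, sub_pos]
  exact log_lt_log (by linarith) (by linarith)

lemma xi_sub_xi (s t u : ℝ) : xi s u - xi s t = zeta u u - zeta t t + (u - t) * log (1 - s) := by
  unfold xi zeta
  ring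

lemma xi_sub_xi_strictAntiOn {t u : ℝ} (htu : t < u) :
    StrictAntiOn (fun s => xi s u - xi s t) (Iio 1) := by
  intro s₁ _ s₂ hs₂ hs
  have hlog : log (1 - s₂) < log (1 - s₁) :=
    log_lt_log (by linarith [mem_Iio.mp hs₂]) (by linarith)
  simp only [xi_sub_xi]
  linarith [mul_lt_mul_of_pos_left hlog (sub_pos.mpr htu)]

theorem stmt5_general (t d : ℝ) (hd : d ∈ Set.Ioo t 1)
    (f : ℝ → ℝ)
    (hf : ∀ s ∈ Set.Ioo t d, f s ∈ Set.Icc s 1 ∧ xi s (f s) = xi s t) :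
    StrictMonoOn f (Set.Ioo t d) := by
  intro s₁ h₁ s₂ h₂ hlt
  obtain ⟨hf₁, hxi₁⟩ := hf s₁ h₁
  obtain ⟨hf₂, hxi₂⟩ := hf s₂ h₂
  rcases lt_or_ge (f s₁) s₂ with hc | hc
  · exact hc.trans_le hf₂.1
  have hs₂ : s₂ < 1 := h₂.2.trans hd.2
  have hgap := xi_sub_xi_strictAntiOn (h₂.1.trans_le hc) (hlt.trans hs₂) hs₂ hlt
  refine ((xi_strictMonoOn s₂).lt_iff_lt ⟨hc, hf₁.2⟩ hf₂).mp ?_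
  simp only [hxi₁, sub_self] at hgap
  linarith

theorem stmt5 (t d : ℝ) (ht : 0 ≤ t) (ht1 : t < 1) (hd : d ∈ Set.Ioo t 1)
    (hde : xi d t = xi d 1)
    (f : ℝ → ℝ)
    (hf : ∀ s ∈ Set.Ioo t d, f s ∈ Set.Icc s 1 ∧ xi s (f s) = xi s t) :
    StrictMonoOn f (Set.Ioo t d) :=
  stmt5_general t d hd f hf
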